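/- arXiv:1202.5730 — 4 statements merged into one kernel-verified Lean document; each statement's English description precedes it below -/
import Mathlib

section
/- For all integers a, k and every positive integer ℓ, the number a^ℓ · ∏_{j=0}^{ℓ-1} (k + j·a) is divisible by ℓ!. -/
/-!
Work one prime `p` at a time. If `p ∣ a`, the factor `a ^ ℓ` already absorbs the `p`-part of
`ℓ!`, whose exponent is at most `ℓ`. Otherwise `a` is invertible modulo that prime power `q`, say
`v * a ≡ 1`, and then `k + j * a ≡ (-a) * (-v * k - j) [ZMOD q]`: up to a unit the progression
becomes `ℓ` consecutive integers, whose product `ℓ! * choose (-v * k) ℓ` is divisible by `ℓ!`.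
-/

open Finset

lemma factorial_dvd_prod_range_sub (m : ℤ) (ℓ : ℕ) :
    (ℓ.factorial : ℤ) ∣ ∏ j ∈ range ℓ, (m - j) :=
  ⟨Ring.choose m ℓ, by
    rw [← descPochhammer_eval_eq_prod_range, Polynomial.eval_eq_smeval,
      Ring.descPochhammer_eq_factorial_smul_choose, nsmul_eq_mul]⟩

lemma natCast_dvd_prod_arith_of_isCoprime {q ℓ : ℕ} {a : ℤ} (k : ℤ) (hq : q ∣ ℓ.factorial)
    (ha : IsCoprime (q : ℤ) a) :
    (q : ℤ) ∣ ∏ j ∈ range ℓ, (k + (j : ℤ) * a) := by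
  obtain ⟨u, v, huv⟩ := ha
  have hva : (v : ZMod q) * a = 1 := by
    simpa using congrArg (Int.cast : ℤ → ZMod q) huv
  have hconsec : ((∏ j ∈ range ℓ, (-(v * k) - j) : ℤ) : ZMod q) = 0 :=
    (ZMod.intCast_zmod_eq_zero_iff_dvd _ q).2
      ((Int.natCast_dvd_natCast.2 hq).trans (factorial_dvd_prod_range_sub _ ℓ))
  rw [← ZMod.intCast_zmod_eq_zero_iff_dvd]
  push_cast at hconsec ⊢
  calc ∏ j ∈ range ℓ, ((k : ZMod q) + j * a)
      = ∏ j ∈ range ℓ, (-(a : ZMod q)) * (-(v * k) - j) :=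
        prod_congr rfl fun j _ => by linear_combination (-(k : ZMod q)) * hva
    _ = 0 := by rw [prod_mul_distrib, hconsec, mul_zero]

lemma le_of_prime_pow_dvd_factorial {p e ℓ : ℕ} (hp : p.Prime) (h : p ^ e ∣ ℓ.factorial) :
    e ≤ ℓ := by
  have := Fact.mk hp
  exact ((padicValNat_dvd_iff_le ℓ.factorial_ne_zero).1 h).trans (padicValNat_factorial_le p ℓ)

lemma prime_pow_dvd_pow_mul_prod_arith {p e ℓ : ℕ} (a k : ℤ) (hp : p.Prime)
    (h : p ^ e ∣ ℓ.factorial) :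
    ((p ^ e : ℕ) : ℤ) ∣ a ^ ℓ * ∏ j ∈ range ℓ, (k + (j : ℤ) * a) := by
  by_cases hpa : (p : ℤ) ∣ a
  · refine dvd_mul_of_dvd_left ?_ _
    push_cast
    exact (pow_dvd_pow _ (le_of_prime_pow_dvd_factorial hp h)).trans (pow_dvd_pow_of_dvd hpa ℓ)
  · have hcop : IsCoprime ((p ^ e : ℕ) : ℤ) a := by
      push_cast
      exact ((Nat.prime_iff_prime_int.1 hp).coprime_iff_not_dvd.2 hpa).pow_left
    exact dvd_mul_of_dvd_right (natCast_dvd_prod_arith_of_isCoprime k h hcop) _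

theorem stmt_0_general (a k : ℤ) (ℓ : ℕ) :
    ((Nat.factorial ℓ : ℤ)) ∣ a ^ ℓ * ∏ j ∈ Finset.range ℓ, (k + (j : ℤ) * a) := by
  rw [Int.natCast_dvd, Nat.dvd_iff_prime_pow_dvd_dvd]
  intro p e hp h
  rw [← Int.natCast_dvd]
  exact prime_pow_dvd_pow_mul_prod_arith a k hp h

/-- For all integers `a`, `k` and every positive integer `ℓ`, the number
`a^ℓ * ∏_{j=0}^{ℓ-1} (k + j·a)` is divisible by `ℓ!`. -/
theorem stmt_0 (a k : ℤ) (ℓ : ℕ) (hℓ : 0 < ℓ) :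
    ((Nat.factorial ℓ : ℤ)) ∣ a ^ ℓ * ∏ j ∈ Finset.range ℓ, (k + (j : ℤ) * a) :=
  stmt_0_general a k ℓ
end

section
/- Let L be a Lie algebra over a field of characteristic 0 containing an element h, with standard coproduct Δ₀ on U(L). Then for every positive integer r and every scalar s, Δ₀(h^{[r]}) = Σ_{i=0}^{r} C(r,i) · h_{−s}^{[i]} ⊗ h_{s}^{[r−i]}, where h_a^{[m]} := (h+a)(h+a−1)···(h+a−m+1). -/
open TensorProduct

/-- The shifted falling factorial `h_a^{[m]} = (h+a)(h+a-1)⋯(h+a-m+1)`. -/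
def fallingFac {R A : Type*} [CommRing R] [Ring A] [Algebra R A] (h : A) (a : R) : ℕ → A
  | 0 => 1
  | s + 1 => fallingFac h a s * (h + algebraMap R A (a - s))

/-!
Since `Δ₀` is an algebra map and `h` is primitive, `Δ₀(h^{[r]})` is the falling factorial of
`h ⊗ 1 + 1 ⊗ h = (h ⊗ 1 - s) + (1 ⊗ h + s)`. The two summands commute, so the Chu–Vandermonde
identity for falling factorials of commuting elements splits it into the stated sum.
-/

open Polynomial

section FallingFactorial

variable {R A : Type*} [CommRing R] [Ring A] [Algebra R A]

theorem fallingFac_eq_smeval_descPochhammer (h : A) (a : R) (n : ℕ) :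
    fallingFac h a n = (descPochhammer ℤ n).smeval (h + algebraMap R A a) := by
  induction n with
  | zero => simp [fallingFac]
  | succ n ih =>
    rw [fallingFac, ih, descPochhammer_succ_right, smeval_mul, smeval_sub, smeval_X,
      smeval_natCast, map_sub, map_natCast]
    simp only [pow_one, pow_zero, nsmul_eq_mul, mul_one]
    abel_nf

theorem map_fallingFac {B : Type*} [Ring B] [Algebra R B] (f : A →ₐ[R] B) (h : A) (a : R)
    (n : ℕ) : f (fallingFac h a n) = fallingFac (f h) a n := by
  induction n with
  | zero => simp [fallingFac]
  | succ n ih => simp [fallingFac, ih]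

theorem fallingFac_add {x y : A} (hxy : Commute x y) (a b : R) (n : ℕ) :
    fallingFac (x + y) (a + b) n =
      ∑ i ∈ Finset.range (n + 1), n.choose i • (fallingFac x a i * fallingFac y b (n - i)) := by
  have hc : Commute (x + algebraMap R A a) (y + algebraMap R A b) :=
    (hxy.add_right (Algebra.commute_algebraMap_right b x)).add_left
      ((Algebra.commute_algebraMap_left a y).add_right (Algebra.commute_algebraMap_left a _))
  simp only [fallingFac_eq_smeval_descPochhammer, map_add, add_add_add_comm x y,
    Ring.descPochhammer_smeval_add n hc, nsmul_eq_mul]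
  exact Finset.Nat.sum_antidiagonal_eq_sum_range_succ (fun i j => (n.choose i : A) *
    ((descPochhammer ℤ i).smeval (x + algebraMap R A a) *
      (descPochhammer ℤ j).smeval (y + algebraMap R A b))) n

variable {B : Type*} [Ring B] [Algebra R B]

theorem fallingFac_tmul_one (x : A) (a : R) (n : ℕ) :
    fallingFac (x ⊗ₜ[R] (1 : B)) a n = fallingFac x a n ⊗ₜ[R] (1 : B) :=
  (map_fallingFac Algebra.TensorProduct.includeLeft x a n).symm

theorem fallingFac_one_tmul (y : B) (a : R) (n : ℕ) :
    fallingFac ((1 : A) ⊗ₜ[R] y) a n = (1 : A) ⊗ₜ[R] fallingFac y a n :=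
  (map_fallingFac (Algebra.TensorProduct.includeRight (A := A)) y a n).symm

end FallingFactorial

theorem stmt_4_general (F A : Type*) [Field F] [Ring A] [Bialgebra F A]
    (h : A) (hprim : Coalgebra.comul (R := F) h = h ⊗ₜ[F] (1 : A) + (1 : A) ⊗ₜ[F] h)
    (r : ℕ) (s : F) :
    Coalgebra.comul (R := F) (fallingFac h (0 : F) r)
      = ∑ i ∈ Finset.range (r + 1),
          (r.choose i : F) • (fallingFac h (-s) i ⊗ₜ[F] fallingFac h s (r - i)) := by
  have hcomm : Commute (h ⊗ₜ[F] (1 : A)) ((1 : A) ⊗ₜ[F] h) := by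
    simp [Commute, SemiconjBy, Algebra.TensorProduct.tmul_mul_tmul]
  calc Coalgebra.comul (R := F) (fallingFac h (0 : F) r)
      = fallingFac (h ⊗ₜ[F] (1 : A) + (1 : A) ⊗ₜ[F] h) (-s + s) r := by
        rw [neg_add_cancel, ← hprim]
        exact map_fallingFac (Bialgebra.comulAlgHom F A) h 0 r
    _ = ∑ i ∈ Finset.range (r + 1), r.choose i •
          (fallingFac (h ⊗ₜ[F] (1 : A)) (-s) i * fallingFac ((1 : A) ⊗ₜ[F] h) s (r - i)) :=
        fallingFac_add hcomm _ _ r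
    _ = _ := by
      refine Finset.sum_congr rfl fun i _ => ?_
      rw [fallingFac_tmul_one, fallingFac_one_tmul, Algebra.TensorProduct.tmul_mul_tmul,
        mul_one, one_mul, Nat.cast_smul_eq_nsmul]

/-- In the universal enveloping algebra of a Lie algebra over a field of characteristic 0
(modelled as a bialgebra `A` over `F`), for a primitive element `h`, every positive
integer `r` and every scalar `s`:
`Δ₀(h^{[r]}) = Σ_{i=0}^{r} C(r,i) · h_{−s}^{[i]} ⊗ h_{s}^{[r−i]}`. -/
theorem stmt_4 (F A : Type*) [Field F] [CharZero F] [Ring A] [Bialgebra F A]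
    (h : A) (hprim : Coalgebra.comul (R := F) h = h ⊗ₜ[F] (1 : A) + (1 : A) ⊗ₜ[F] h)
    (r : ℕ) (hr : 0 < r) (s : F) :
    Coalgebra.comul (R := F) (fallingFac h (0 : F) r)
      = ∑ i ∈ Finset.range (r + 1),
          (r.choose i : F) • (fallingFac h (-s) i ⊗ₜ[F] fallingFac h s (r - i)) :=
  stmt_4_general F A h hprim r s
end

section
/- Let h = D_H(x^{ε_k+ε_{−k}}), e = D_H(x^{2ε_k+ε_{−k}}), and define d^{(ℓ)} = (1/ℓ!)(ad e)^ℓ on the enveloping algebra. Then for every α ∈ ℤ^{2n} and ℓ ≥ 0, d^{(ℓ)}(D_H(x^α)) = A_ℓ · D_H(x^{α+ℓε_k}), where A_ℓ = (1/ℓ!) ∏_{j=0}^{ℓ−1} (α_k − 2α_{−k} + j) and A_0 = 1. -/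
/-!
Since `x^{pε_k+qε_{−k}}` involves only `x_{±k}`, only the `i = k` term of the sum defining
`D_H(x^{pε_k+qε_{−k}})` survives, and so its bracket with any `D_H(x^β)` is the single multiple
`(qβ_k − pβ_{−k}) D_H(x^{β+(p−1)ε_k+(q−1)ε_{−k}})`. For `e` (`p = 2`, `q = 1`) this makes `ad e`
a weighted shift `β ↦ β + ε_k` with weight `β_k − 2β_{−k}`, whose `ℓ`-th power multiplies by
`∏_{j<ℓ}(α_k − 2α_{−k} + j)`.
-/

open Finsupp

/-- The Laurent polynomial algebra `ℚ_{2n}` (see the paper), modelled as the group algebra of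
exponent vectors (finitely supported `ℤ`-valued functions on the index set `ℤ`). -/
abbrev LaurentAlg (F : Type*) [Field F] := AddMonoidAlgebra F (ℤ →₀ ℤ)

/-- `D_H(x^α)`, acting on a monomial `x^β` by
`Σ_{i=1}^{n} (α_{−i}β_i − α_iβ_{−i}) x^{α+β−ε_i−ε_{−i}}`. -/
noncomputable def DH (F : Type*) [Field F] (n : ℕ) (α : ℤ →₀ ℤ) :
    Module.End F (LaurentAlg F) :=
  (Finsupp.lsum F fun β => LinearMap.toSpanSingleton F _
    (∑ i ∈ Finset.Icc (1 : ℤ) (n : ℤ),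
      ((α (-i) * β i - α i * β (-i) : ℤ) : F) •
        (AddMonoidAlgebra.single (α + β - Finsupp.single i 1 - Finsupp.single (-i) 1) (1 : F)
          : LaurentAlg F))).comp (AddMonoidAlgebra.coeffLinearEquiv F).toLinearMap

attribute [local instance 100] LieRing.ofAssociativeRing

lemma DH_apply_single (F : Type*) [Field F] (n : ℕ) (α β : ℤ →₀ ℤ) (b : F) :
    DH F n α (AddMonoidAlgebra.single β b) =
      ∑ i ∈ Finset.Icc (1 : ℤ) (n : ℤ),
        ((α (-i) * β i - α i * β (-i) : ℤ) : F) •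
          (AddMonoidAlgebra.single (α + β - single i 1 - single (-i) 1) b : LaurentAlg F) := by
  rw [DH, LinearMap.comp_apply, LinearEquiv.coe_coe, AddMonoidAlgebra.coeffLinearEquiv_apply,
    AddMonoidAlgebra.coeff_single, lsum_single, LinearMap.toSpanSingleton_apply, Finset.smul_sum]
  refine Finset.sum_congr rfl fun i _ => ?_
  rw [smul_comm, AddMonoidAlgebra.smul_single, smul_eq_mul, mul_one]

section PairSupport

variable (F : Type*) [Field F] {n : ℕ} {k : ℤ} (p q : ℤ)

lemma DH_single_add_single_apply_single (hk1 : 1 ≤ k) (hk2 : k ≤ (n : ℤ)) (γ : ℤ →₀ ℤ)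
    (b : F) :
    DH F n (single k p + single (-k) q) (AddMonoidAlgebra.single γ b) =
      ((q * γ k - p * γ (-k) : ℤ) : F) •
        (AddMonoidAlgebra.single (single k p + single (-k) q + γ - single k 1 - single (-k) 1) b
          : LaurentAlg F) := by
  rw [DH_apply_single, Finset.sum_eq_single_of_mem k (Finset.mem_Icc.2 ⟨hk1, hk2⟩)]
  · simp [show -k ≠ k by omega, show k ≠ -k by omega]
  · intro i hi hik
    have hi1 : 1 ≤ i := (Finset.mem_Icc.1 hi).1
    simp [show k ≠ -i by omega, show -k ≠ -i by omega, show k ≠ i by omega,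
      show -k ≠ i by omega]

lemma lie_DH_single_add_single (hk1 : 1 ≤ k) (hk2 : k ≤ (n : ℤ)) (β : ℤ →₀ ℤ) :
    ⁅DH F n (single k p + single (-k) q), DH F n β⁆ =
      ((q * β k - p * β (-k) : ℤ) : F) •
        DH F n (single k p + single (-k) q + β - single k 1 - single (-k) 1) := by
  rw [Ring.lie_def]
  refine AddMonoidAlgebra.lhom_ext' fun γ => LinearMap.ext fun b => ?_
  simp only [LinearMap.comp_apply, AddMonoidAlgebra.lsingle_apply, LinearMap.sub_apply,
    LinearMap.smul_apply, Module.End.mul_apply]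
  rw [DH_apply_single F n β γ b, map_sum, DH_single_add_single_apply_single F p q hk1 hk2,
    map_smul, DH_apply_single, DH_apply_single]
  simp only [map_smul, DH_single_add_single_apply_single F p q hk1 hk2]
  rw [Finset.smul_sum, Finset.smul_sum, ← Finset.sum_sub_distrib]
  refine Finset.sum_congr rfl fun i hi => ?_
  obtain ⟨hi1, -⟩ := Finset.mem_Icc.1 hi
  set a : ℤ →₀ ℤ := single k p + single (-k) q
  set E := a + β - single k 1 - single (-k) 1 + γ - single i 1 - single (-i) 1
  have hE₁ : a + (β + γ - single i 1 - single (-i) 1) - single k 1 - single (-k) 1 = E := by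
    simp only [E]; abel
  have hE₂ : β + (a + γ - single k 1 - single (-k) 1) - single i 1 - single (-i) 1 = E := by
    simp only [E]; abel
  rw [hE₁, hE₂, smul_smul, smul_smul, smul_smul, ← sub_smul]
  norm_cast
  congr 1
  rcases eq_or_ne i k with rfl | hik
  · simp [a, show -i ≠ i by omega, show i ≠ -i by omega]
    ring
  · simp [a, hik, hik.symm, show -i ≠ k by omega, show k ≠ -i by omega, show i ≠ -k by omega,
      show -k ≠ i by omega, show -i ≠ -k by omega, show -k ≠ -i by omega]
    ring

end PairSupport

lemma Module.End.pow_apply_eq_prod_smul_of_apply_eq_smul_add {R M A : Type*} [CommSemiring R]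
    [AddCommMonoid M] [Module R M] [AddMonoid A] (f : Module.End R M) (v : A → M) (c : A → R)
    (δ : A) (hf : ∀ a, f (v a) = c a • v (a + δ)) (a : A) (ℓ : ℕ) :
    (f ^ ℓ) (v a) = (∏ j ∈ Finset.range ℓ, c (a + j • δ)) • v (a + ℓ • δ) := by
  induction ℓ with
  | zero => simp
  | succ m ih =>
    rw [pow_succ', Module.End.mul_apply, ih, map_smul, hf, smul_smul, Finset.prod_range_succ,
      mul_comm, succ_nsmul, add_assoc]

theorem stmt_8_general (F : Type*) [Field F] (n : ℕ) (k : ℤ)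
    (hk1 : 1 ≤ k) (hk2 : k ≤ (n : ℤ)) (α : ℤ →₀ ℤ) (ℓ : ℕ) :
    (ℓ.factorial : F)⁻¹ •
      ((LieAlgebra.ad F (Module.End F (LaurentAlg F))
          (DH F n (Finsupp.single k 2 + Finsupp.single (-k) 1)) ^ ℓ) (DH F n α))
      = ((ℓ.factorial : F)⁻¹ * ∏ j ∈ Finset.range ℓ, ((α k - 2 * α (-k) + (j : ℤ) : ℤ) : F)) •
          DH F n (α + Finsupp.single k (ℓ : ℤ)) := by
  have hshift : ∀ β : ℤ →₀ ℤ,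
      single k 2 + single (-k) 1 + β - single k 1 - single (-k) 1 = β + single k 1 := fun β => by
    rw [show (2 : ℤ) = 1 + 1 from rfl, single_add]; abel
  have had : ∀ β, LieAlgebra.ad F _ (DH F n (single k 2 + single (-k) 1)) (DH F n β) =
      ((β k - 2 * β (-k) : ℤ) : F) • DH F n (β + single k 1) := fun β => by
    rw [LieAlgebra.ad_apply, lie_DH_single_add_single F 2 1 hk1 hk2, hshift, one_mul, mul_comm]
  rw [Module.End.pow_apply_eq_prod_smul_of_apply_eq_smul_add _ _ _ _ had, smul_smul, smul_single,
    nsmul_one]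
  congr 2
  refine Finset.prod_congr rfl fun j _ => ?_
  simp [smul_single, show k ≠ -k by omega]
  ring

/-- With `h = D_H(x^{ε_k+ε_{−k}})`, `e = D_H(x^{2ε_k+ε_{−k}})` and
`d^{(ℓ)} = (1/ℓ!)(ad e)^ℓ`, for every `α ∈ ℤ^{2n}` and `ℓ ≥ 0`:
`d^{(ℓ)}(D_H(x^α)) = A_ℓ · D_H(x^{α+ℓε_k})`, where
`A_ℓ = (1/ℓ!)∏_{j=0}^{ℓ−1}(α_k − 2α_{−k} + j)` (so `A_0 = 1`). -/
theorem stmt_8 (F : Type*) [Field F] [CharZero F] (n : ℕ) (k : ℤ)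
    (hk1 : 1 ≤ k) (hk2 : k ≤ (n : ℤ)) (α : ℤ →₀ ℤ)
    (hα : ∀ j, α j ≠ 0 → j ≠ 0 ∧ |j| ≤ (n : ℤ)) (ℓ : ℕ) :
    (ℓ.factorial : F)⁻¹ •
      ((LieAlgebra.ad F (Module.End F (LaurentAlg F))
          (DH F n (Finsupp.single k 2 + Finsupp.single (-k) 1)) ^ ℓ) (DH F n α))
      = ((ℓ.factorial : F)⁻¹ * ∏ j ∈ Finset.range ℓ, ((α k - 2 * α (-k) + (j : ℤ) : ℤ) : F)) •
          DH F n (α + Finsupp.single k (ℓ : ℤ)) :=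
  stmt_8_general F n k hk1 hk2 α ℓ
end

section
/- In the setting above, define v_a = Σ_{r≥0} (1/r!) h_a^{[r]} e^r t^r and u_b = Σ_{r≥0} ((−1)^r/r!) h_{−b}^{[r]} e^r t^r in U[[t]]. Then v_a · u_b = (1−et)^{−(a+b)} for all scalars a, b. In particular u = u_0 is invertible with u^{−1} = v_0. -/
/-- The generalized binomial coefficient `C(c,r) = c(c−1)⋯(c−r+1)/r!` for a scalar `c`. -/
noncomputable def binomCoeff {F : Type*} [Field F] (c : F) (r : ℕ) : F :=
  (r.factorial : F)⁻¹ * ∏ j ∈ Finset.range r, (c - j)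

/-! Since `[h, e] = e`, moving `e^i` to the right past a polynomial in `h` replaces `h` by `h - i`.
Hence the `t^n`-coefficient of `v_a u_b` is `c_n(h) e^n` with
`c_n(h) = Σ_{i+j=n} (1/i!) ((-1)^j/j!) h_a^{[i]} h_{-b-i}^{[j]}`, a polynomial in `h` alone.
It suffices to evaluate `c_n` at scalars `x` (the field is infinite): there, by upper negation,
`c_n(x) = Σ_{i+j=n} C(x+a, i) C(n-1+b-x, j)`, which Vandermonde turns into
`C(n-1+a+b, n) = (-1)^n C(-(a+b), n)`. For `a = b = 0` this gives `v_0 u_0 = 1`, and as `u_0` has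
constant term `1` it is a unit, so also `u_0 v_0 = 1`. -/

open Finset Polynomial Nat

lemma descPochhammer_smeval_eq_prod_range {R : Type*} [CommRing R] (c : R) (n : ℕ) :
    (descPochhammer ℤ n).smeval c = ∏ j ∈ range n, (c - j) := by
  induction n with
  | zero => simp [smeval_one]
  | succ n ih =>
    simp [descPochhammer_succ_right, smeval_mul, ih, prod_range_succ, smeval_sub, smeval_natCast]

lemma prod_range_sub_eq_factorial_smul_choose {R : Type*} [CommRing R] [BinomialRing R]
    (c : R) (n : ℕ) : ∏ j ∈ range n, (c - j) = n ! • Ring.choose c n := by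
  rw [← descPochhammer_smeval_eq_prod_range, Ring.descPochhammer_eq_factorial_smul_choose]

lemma neg_one_pow_mul_choose_neg {R : Type*} [CommRing R] [BinomialRing R] (r : R) (n : ℕ) :
    (-1) ^ n * Ring.choose (-r) n = Ring.choose (r + n - 1) n := by
  simp [Ring.choose_neg, Units.smul_def, Int.coe_negOnePow, ← mul_assoc, ← mul_pow]

lemma fallingFac_map {R A B : Type*} [CommRing R] [Ring A] [Ring B] [Algebra R A] [Algebra R B]
    (f : A →ₐ[R] B) (h : A) (a : R) (n : ℕ) : f (fallingFac h a n) = fallingFac (f h) a n := by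
  induction n with
  | zero => simp [fallingFac]
  | succ n ih => simp [fallingFac, ih]

section Field

variable {F : Type*} [Field F] [CharZero F]

lemma binomCoeff_eq_choose (c : F) (n : ℕ) : binomCoeff c n = Ring.choose c n := by
  rw [binomCoeff, prod_range_sub_eq_factorial_smul_choose, nsmul_eq_mul, inv_mul_cancel_left₀]
  exact_mod_cast n.factorial_ne_zero

lemma factorial_inv_mul_fallingFac (x a : F) (n : ℕ) :
    (n ! : F)⁻¹ * fallingFac x a n = Ring.choose (x + a) n := by
  have hprod : fallingFac x a n = ∏ j ∈ range n, (x + a - j) := by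
    induction n with
    | zero => rfl
    | succ n ih => simp [fallingFac, ih, prod_range_succ, add_sub_assoc]
  rw [hprod, ← binomCoeff, binomCoeff_eq_choose]

lemma sum_antidiagonal_fallingFac_mul_fallingFac (x a b : F) (n : ℕ) :
    ∑ ij ∈ antidiagonal n, ((ij.1 ! : F)⁻¹ * ((-1) ^ ij.2 * (ij.2 ! : F)⁻¹)) *
      (fallingFac x a ij.1 * fallingFac x (-b - ij.1) ij.2)
    = (-1) ^ n * binomCoeff (-(a + b)) n := by
  have hterm : ∀ ij ∈ antidiagonal n,
      ((ij.1 ! : F)⁻¹ * ((-1) ^ ij.2 * (ij.2 ! : F)⁻¹)) *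
        (fallingFac x a ij.1 * fallingFac x (-b - ij.1) ij.2)
      = Ring.choose (x + a) ij.1 * Ring.choose (a + b + n - 1 - (x + a)) ij.2 := by
    rintro ⟨i, j⟩ hij
    have hn : (n : F) = i + j := by exact_mod_cast (mem_antidiagonal.mp hij).symm
    dsimp only
    rw [← factorial_inv_mul_fallingFac, hn,
      show a + b + (i + j : F) - 1 - (x + a) = (b + i - x) + j - 1 by ring,
      ← neg_one_pow_mul_choose_neg, show -(b + i - x) = x + (-b - i) by ring,
      ← factorial_inv_mul_fallingFac]
    ring
  rw [sum_congr rfl hterm, ← Ring.add_choose_eq n (Commute.all _ _), add_sub_cancel,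
    binomCoeff_eq_choose, neg_one_pow_mul_choose_neg]

lemma sum_antidiagonal_smul_fallingFac_mul_fallingFac {A : Type*} [Ring A] [Algebra F A]
    (H : A) (a b : F) (n : ℕ) :
    ∑ ij ∈ antidiagonal n, ((ij.1 ! : F)⁻¹ * ((-1) ^ ij.2 * (ij.2 ! : F)⁻¹)) •
      (fallingFac H a ij.1 * fallingFac H (-b - ij.1) ij.2)
    = algebraMap F A ((-1) ^ n * binomCoeff (-(a + b)) n) := by
  have hX : ∑ ij ∈ antidiagonal n, ((ij.1 ! : F)⁻¹ * ((-1) ^ ij.2 * (ij.2 ! : F)⁻¹)) •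
      (fallingFac (X : F[X]) a ij.1 * fallingFac X (-b - ij.1) ij.2)
      = C ((-1) ^ n * binomCoeff (-(a + b)) n) := by
    refine Polynomial.funext fun x => ?_
    rw [← sum_antidiagonal_fallingFac_mul_fallingFac x a b n]
    simp [eval_finsetSum, ← coe_aeval_eq_eval, fallingFac_map]
  simpa [fallingFac_map] using congrArg (aeval H) hX

end Field

section Commutation

variable {R A : Type*} [CommRing R] [Ring A] [Algebra R A] {H E : A}

lemma mul_add_algebraMap_of_lie_eq (hHE : H * E - E * H = E) (c : R) :
    E * (H + algebraMap R A c) = (H + algebraMap R A (c - 1)) * E := by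
  rw [mul_add, ← Algebra.commutes, map_sub, map_one, add_mul, sub_mul, one_mul,
    sub_eq_iff_eq_add.mp hHE]
  abel

lemma pow_mul_add_algebraMap_of_lie_eq (hHE : H * E - E * H = E) (c : R) (i : ℕ) :
    E ^ i * (H + algebraMap R A c) = (H + algebraMap R A (c - i)) * E ^ i := by
  induction i generalizing c with
  | zero => simp
  | succ i ih =>
    rw [pow_succ, mul_assoc, mul_add_algebraMap_of_lie_eq hHE, ← mul_assoc, ih, mul_assoc,
      ← pow_succ, Nat.cast_succ, sub_sub, add_comm 1]

lemma pow_mul_fallingFac_of_lie_eq (hHE : H * E - E * H = E) (c : R) (i j : ℕ) :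
    E ^ i * fallingFac H c j = fallingFac H (c - i) j * E ^ i := by
  induction j with
  | zero => simp [fallingFac]
  | succ j ih =>
    rw [fallingFac, ← mul_assoc, ih, mul_assoc, pow_mul_add_algebraMap_of_lie_eq hHE,
      ← mul_assoc, fallingFac, sub_right_comm]

end Commutation

section PowerSeries

variable {F A : Type*} [Field F] [CharZero F] [Ring A] [Algebra F A] {H E : A}

lemma mk_fallingFac_mul_mk_fallingFac (hHE : H * E - E * H = E) (a b : F) :
    (PowerSeries.mk fun r => ((r ! : F)⁻¹) • (fallingFac H a r * E ^ r)) *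
      (PowerSeries.mk fun r => ((-1 : F) ^ r * (r ! : F)⁻¹) • (fallingFac H (-b) r * E ^ r))
    = PowerSeries.mk fun r => ((-1 : F) ^ r * binomCoeff (-(a + b)) r) • E ^ r := by
  ext n
  rw [PowerSeries.coeff_mul, PowerSeries.coeff_mk]
  have hterm : ∀ ij ∈ antidiagonal n,
      PowerSeries.coeff ij.1 (PowerSeries.mk fun r => ((r ! : F)⁻¹) • (fallingFac H a r * E ^ r)) *
        PowerSeries.coeff ij.2 (PowerSeries.mk fun r =>
          ((-1 : F) ^ r * (r ! : F)⁻¹) • (fallingFac H (-b) r * E ^ r))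
      = (((ij.1 ! : F)⁻¹ * ((-1) ^ ij.2 * (ij.2 ! : F)⁻¹)) •
          (fallingFac H a ij.1 * fallingFac H (-b - ij.1) ij.2)) * E ^ n := by
    rintro ⟨i, j⟩ hij
    rw [PowerSeries.coeff_mk, PowerSeries.coeff_mk, smul_mul_smul_comm, smul_mul_assoc,
      ← mem_antidiagonal.mp hij, pow_add, mul_assoc, ← mul_assoc (E ^ i),
      pow_mul_fallingFac_of_lie_eq hHE]
    simp only [mul_assoc]
  rw [sum_congr rfl hterm, ← sum_mul, sum_antidiagonal_smul_fallingFac_mul_fallingFac,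
    ← Algebra.smul_def]

lemma mk_binomCoeff_zero (E : A) :
    (PowerSeries.mk fun r => ((-1 : F) ^ r * binomCoeff 0 r) • E ^ r) = 1 := by
  ext n
  rw [PowerSeries.coeff_mk, PowerSeries.coeff_one, binomCoeff_eq_choose, Ring.choose_zero_ite]
  split_ifs with hn
  · simp [hn]
  · simp

end PowerSeries

lemma mul_eq_one_comm_of_isUnit {M : Type*} [Monoid M] {p q : M} (hq : IsUnit q) (h : p * q = 1) :
    q * p = 1 := by
  obtain ⟨w, rfl⟩ := hq
  rw [Units.mul_eq_one_iff_eq_inv.mp h, Units.mul_inv]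

/-- In `U[[t]]`, where `U = U(L)` for a Lie algebra `L` over a char-0 field containing
`h, e` with `[h,e] = e`: with `v_a = Σ (1/r!) h_a^{[r]} e^r t^r` and
`u_b = Σ ((−1)^r/r!) h_{−b}^{[r]} e^r t^r`, one has `v_a · u_b = (1−et)^{−(a+b)}`
(the formal binomial series `Σ_r C(−(a+b),r)(−1)^r e^r t^r`); in particular
`u = u_0` is invertible with `u^{−1} = v_0`. -/
theorem stmt_12 (F L : Type*) [Field F] [CharZero F] [LieRing L] [LieAlgebra F L]
    (h e : L) (hrel : ⁅h, e⁆ = e) (a b : F) :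
    letI U := UniversalEnvelopingAlgebra F L
    let ι : L → U := fun x => UniversalEnvelopingAlgebra.ι F x
    let v : F → PowerSeries U := fun c => PowerSeries.mk fun r =>
      ((r.factorial : F)⁻¹) • (fallingFac (ι h) c r * (ι e) ^ r)
    let u : F → PowerSeries U := fun c => PowerSeries.mk fun r =>
      ((-1 : F) ^ r * (r.factorial : F)⁻¹) • (fallingFac (ι h) (-c) r * (ι e) ^ r)
    v a * u b
        = PowerSeries.mk (fun r =>
            ((-1 : F) ^ r * binomCoeff (-(a + b)) r) • ((ι e) ^ r))
      ∧ u 0 * v 0 = 1 ∧ v 0 * u 0 = 1 := by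
  intro ι v u
  have hHE : ι h * ι e - ι e * ι h = ι e := by
    let := LieRing.ofAssociativeRing (A := UniversalEnvelopingAlgebra F L)
    rw [← Ring.lie_def, ← LieHom.map_lie, hrel]
  have hvu (c d : F) := mk_fallingFac_mul_mk_fallingFac hHE c d
  have hvu0 : v 0 * u 0 = 1 := by
    rw [hvu, add_zero, neg_zero, mk_binomCoeff_zero]
  have hu0 : IsUnit (u 0) := by
    rw [PowerSeries.isUnit_iff_constantCoeff, ← PowerSeries.coeff_zero_eq_constantCoeff_apply]
    simp [u, fallingFac]
  exact ⟨hvu a b, mul_eq_one_comm_of_isUnit hu0 hvu0, hvu0⟩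
end
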